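/- Let $\bar\mu = \mathcal{U}([0,1])$, let $m:\mathbb{R}\to\mathbb{R}$ be $L^\ast$-Lipschitz, let $\Lambda$ be the 1-periodic hat function with values in $[-1,1]$ and mean zero, and define $\mathcal{S}^{1/N}(\bar u) = m(\bar u) + \Lambda(N\bar u)$. Let $\Psi^{1/N} = \arg\min_{\mathrm{Lip}(\Psi)\le L^\ast} \mathbb{E}_{\bar u\sim\bar\mu}|\Psi(\bar u) - \mathcal{S}^{1/N}(\bar u)|^2$ be the optimal $L^\ast$-Lipschitz least-squares approximation. Then $\lim_{N\to\infty}\mathbb{E}_{\bar u\sim\bar\mu}|\Psi^{1/N}(\bar u) - m(\bar u)|^2 = 0$; i.e. the constrained least-squares minimizer collapses to the mean function. -/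

import Mathlib

open MeasureTheory Set Filter
open scoped NNReal Topology

/-- The 1-periodic extension of the hat function with `Λ 0 = Λ 1 = -1` and
`Λ (1/2) = 1`, piecewise linear in between (values in `[-1,1]`, mean zero). -/
noncomputable def hatΛ (x : ℝ) : ℝ := 1 - 4 * |Int.fract x - 1 / 2|

lemma hat_abs_le (x : ℝ) : |hatΛ x| ≤ 1 := by
  have h0 := Int.fract_nonneg x
  have h1 := Int.fract_lt_one x
  have h2 : |Int.fract x - 1 / 2| ≤ 1 / 2 := by
    rw [abs_le]; constructor <;> linarith
  have h3 : (0:ℝ) ≤ |Int.fract x - 1 / 2| := abs_nonneg _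
  rw [hatΛ, abs_le]; constructor <;> linarith

lemma hat_measurable : Measurable hatΛ := by
  unfold hatΛ
  exact (measurable_const.sub
    ((measurable_const.mul ((measurable_fract.sub measurable_const).abs))))

lemma hat_periodic : Function.Periodic hatΛ 1 := by
  intro x
  simp [hatΛ, Int.fract_add_one]

lemma hat_intervalIntegrable (c a b : ℝ) :
    IntervalIntegrable (fun x => hatΛ (c * x)) volume a b := by
  rw [intervalIntegrable_iff]
  refine (Integrable.mono' (g := fun _ => (1:ℝ)) ?_ ?_ ?_)
  · exact (integrableOn_const_iff (C := (1:ℝ))).mpr (Or.inr measure_Ioc_lt_top)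
  · exact (hat_measurable.comp (measurable_const_mul c)).aestronglyMeasurable
  · exact Eventually.of_forall fun x => by simpa using hat_abs_le (c * x)

lemma mul_hat_intervalIntegrable (g : ℝ → ℝ) (hg : Continuous g) (c a b : ℝ) :
    IntervalIntegrable (fun x => g x * hatΛ (c * x)) volume a b := by
  rw [intervalIntegrable_iff]
  refine (Integrable.mono' (g := fun x => |g x|) ?_ ?_ ?_)
  · exact (intervalIntegrable_iff.mp (hg.abs.intervalIntegrable a b))
  · exact (hg.measurable.mul (hat_measurable.comp (measurable_const_mul c))).aestronglyMeasurable
  · refine Eventually.of_forall fun x => ?_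
    rw [Real.norm_eq_abs, abs_mul]
    calc |g x| * |hatΛ (c * x)| ≤ |g x| * 1 :=
          mul_le_mul_of_nonneg_left (hat_abs_le _) (abs_nonneg _)
      _ = |g x| := mul_one _

lemma hat_integral_zero : ∫ x in (0:ℝ)..1, hatΛ x = 0 := by
  have hi1 : IntervalIntegrable hatΛ volume 0 (1/2) := by
    simpa using hat_intervalIntegrable 1 0 (1/2)
  have hi2 : IntervalIntegrable hatΛ volume (1/2) 1 := by
    simpa using hat_intervalIntegrable 1 (1/2) 1
  rw [← intervalIntegral.integral_add_adjacent_intervals hi1 hi2]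
  have e1 : ∫ x in (0:ℝ)..(1/2), hatΛ x = ∫ x in (0:ℝ)..(1/2), (4 * x - 1) := by
    apply intervalIntegral.integral_congr
    intro x hx
    rw [uIcc_of_le (by norm_num : (0:ℝ) ≤ 1/2)] at hx
    have h1 : Int.fract x = x := Int.fract_eq_self.mpr ⟨hx.1, lt_of_le_of_lt hx.2 (by norm_num)⟩
    have h2 : |x - 1/2| = 1/2 - x := by
      rw [abs_of_nonpos (by linarith [hx.2])]; ring
    rw [hatΛ, h1, h2]; ring
  have e2 : ∫ x in (1/2:ℝ)..1, hatΛ x = ∫ x in (1/2:ℝ)..1, (3 - 4 * x) := by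
    apply intervalIntegral.integral_congr
    intro x hx
    rw [uIcc_of_le (by norm_num : (1/2:ℝ) ≤ 1)] at hx
    rcases lt_or_eq_of_le hx.2 with h | h
    · have h1 : Int.fract x = x := Int.fract_eq_self.mpr ⟨by linarith [hx.1], h⟩
      have h2 : |x - 1/2| = x - 1/2 := abs_of_nonneg (by linarith [hx.1])
      rw [hatΛ, h1, h2]; ring
    · subst h
      rw [hatΛ, Int.fract_one, show |(0:ℝ) - 1/2| = 1/2 by rw [abs_of_nonpos] <;> norm_num]
      norm_num
  rw [e1, e2]
  have c1 : ∫ x in (0:ℝ)..(1/2), (4 * x - 1) = 0 := by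
    rw [intervalIntegral.integral_sub ((by continuity : Continuous fun x:ℝ => 4*x).intervalIntegrable _ _)
      intervalIntegrable_const, intervalIntegral.integral_const_mul, integral_id]
    norm_num
  have c2 : ∫ x in (1/2:ℝ)..1, (3 - 4 * x) = 0 := by
    rw [intervalIntegral.integral_sub intervalIntegrable_const
      ((by continuity : Continuous fun x:ℝ => 4*x).intervalIntegrable _ _),
      intervalIntegral.integral_const_mul, integral_id]
    norm_num
  rw [c1, c2]; ring

lemma hat_integral_period_zero (k : ℝ) : ∫ x in k..(k+1), hatΛ x = 0 := by
  have := hat_periodic.intervalIntegral_add_eq k 0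
  simpa [this] using hat_integral_zero

lemma key_bound (K : ℝ) (hK : 0 ≤ K) (g : ℝ → ℝ) (hgc : Continuous g)
    (hg : ∀ x y, |g x - g y| ≤ K * |x - y|) (N : ℕ) (hN : 1 ≤ N) :
    |∫ x in (0:ℝ)..1, g x * hatΛ ((N:ℝ) * x)| ≤ K / N := by
  have hN0 : (N:ℝ) ≠ 0 := Nat.cast_ne_zero.mpr (by omega)
  have hNpos : (0:ℝ) < N := by positivity
  set a : ℕ → ℝ := fun k => (k:ℝ) / N with ha
  have hsum : ∑ k ∈ Finset.range N, ∫ x in a k..a (k+1), g x * hatΛ ((N:ℝ) * x)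
      = ∫ x in (a 0)..(a N), g x * hatΛ ((N:ℝ) * x) :=
    intervalIntegral.sum_integral_adjacent_intervals
      (fun k _ => mul_hat_intervalIntegrable g hgc _ _ _)
  have ha0 : a 0 = 0 := by simp [ha]
  have haN : a N = 1 := by simp only [ha]; field_simp
  rw [← ha0, ← haN, ← hsum]
  have hterm : ∀ k : ℕ, |∫ x in a k..a (k+1), g x * hatΛ ((N:ℝ) * x)| ≤ K / N ^ 2 := by
    intro k
    have hfe : (fun x => g x * hatΛ ((N:ℝ) * x))
        = fun x => (fun y => g (y / N) * hatΛ y) ((N:ℝ) * x) := by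
      funext x
      simp [mul_div_cancel_left₀ _ hN0]
    rw [hfe, intervalIntegral.integral_comp_mul_left (fun y => g (y / N) * hatΛ y) hN0]
    have hak : (N:ℝ) * a k = k := by simp only [ha]; field_simp
    have hak1 : (N:ℝ) * a (k+1) = k + 1 := by push_cast [ha]; field_simp
    rw [hak, hak1]
    have hsplit : ∀ y : ℝ, g (y / N) * hatΛ y
        = (g (y / N) - g ((k:ℝ) / N)) * hatΛ y + g ((k:ℝ) / N) * hatΛ y := by
      intro y; ring
    have hi1 : IntervalIntegrable (fun y => (g (y / N) - g ((k:ℝ) / N)) * hatΛ y)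
        volume k (k+1) := by
      simpa using mul_hat_intervalIntegrable (fun y => g (y / N) - g ((k:ℝ) / N))
        (by fun_prop) 1 k (k+1)
    have hi2 : IntervalIntegrable (fun y => g ((k:ℝ) / N) * hatΛ y) volume k (k+1) := by
      simpa using mul_hat_intervalIntegrable (fun _ => g ((k:ℝ) / N)) (by fun_prop) 1 k (k+1)
    have : (∫ y in (k:ℝ)..(k+1), g (y / N) * hatΛ y)
        = (∫ y in (k:ℝ)..(k+1), (g (y / N) - g ((k:ℝ) / N)) * hatΛ y)
          + ∫ y in (k:ℝ)..(k+1), g ((k:ℝ) / N) * hatΛ y := by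
      rw [← intervalIntegral.integral_add hi1 hi2]
      simp only [← hsplit]
    rw [this, intervalIntegral.integral_const_mul, hat_integral_period_zero, mul_zero, add_zero]
    have hb : ‖∫ y in (k:ℝ)..(k+1), (g (y / N) - g ((k:ℝ) / N)) * hatΛ y‖ ≤ (K / N) * |(k:ℝ)+1 - k| := by
      apply intervalIntegral.norm_integral_le_of_norm_le_const
      intro y hy
      rw [uIoc_of_le (by linarith : (k:ℝ) ≤ k + 1)] at hy
      have h1 : |g (y / N) - g ((k:ℝ) / N)| ≤ K * |y / N - (k:ℝ) / N| := hg _ _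
      have h2 : |y / N - (k:ℝ) / N| ≤ 1 / N := by
        rw [div_sub_div_same, abs_div, abs_of_pos hNpos]
        have hyk : |y - (k:ℝ)| ≤ 1 := by
          rw [abs_of_pos (by linarith [hy.1])]; linarith [hy.2]
        gcongr
      rw [Real.norm_eq_abs, abs_mul]
      calc |g (y / N) - g ((k:ℝ) / N)| * |hatΛ y|
          ≤ (K * (1 / N)) * 1 := by
            apply mul_le_mul _ (hat_abs_le y) (abs_nonneg _) (by positivity)
            exact h1.trans (mul_le_mul_of_nonneg_left h2 hK)
        _ = K / N := by ring
    rw [smul_eq_mul, abs_mul, abs_inv, abs_of_pos hNpos]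
    have : |(k:ℝ) + 1 - k| = 1 := by simp
    rw [Real.norm_eq_abs, this, mul_one] at hb
    calc (N:ℝ)⁻¹ * |∫ y in (k:ℝ)..(k+1), (g (y / N) - g ((k:ℝ) / N)) * hatΛ y|
        ≤ (N:ℝ)⁻¹ * (K / N) := by
          exact mul_le_mul_of_nonneg_left hb (by positivity)
      _ = K / N ^ 2 := by rw [inv_mul_eq_div, div_div, ← pow_two]
  calc |∑ k ∈ Finset.range N, ∫ x in a k..a (k+1), g x * hatΛ ((N:ℝ) * x)|
      ≤ ∑ k ∈ Finset.range N, |∫ x in a k..a (k+1), g x * hatΛ ((N:ℝ) * x)| :=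
        Finset.abs_sum_le_sum_abs _ _
    _ ≤ ∑ _k ∈ Finset.range N, K / N ^ 2 := Finset.sum_le_sum fun k _ => hterm k
    _ = N * (K / N ^ 2) := by rw [Finset.sum_const, Finset.card_range, nsmul_eq_mul]
    _ = K / N := by rw [pow_two, ← div_div, mul_comm, div_mul_cancel₀ _ hN0]

/-- Let `m` be `L⋆`-Lipschitz and
`S^{1/N}(ū) = m(ū) + Λ(N ū)`. If `Ψ N` is, for each `N`, an `L⋆`-Lipschitz
minimizer of the least-squares objective
`E_{ū ~ U([0,1])} |Ψ(ū) - S^{1/N}(ū)|²` over `L⋆`-Lipschitz functions, then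
`E |Ψ^{1/N} - m|² → 0` as `N → ∞`: the constrained least-squares minimizer
collapses to the mean function. -/
theorem constrained_least_squares_collapses_to_mean
    (L : ℝ≥0) (m : ℝ → ℝ) (hm : LipschitzWith L m)
    (Ψ : ℕ → ℝ → ℝ) (hΨLip : ∀ N, LipschitzWith L (Ψ N))
    (hΨmin : ∀ N : ℕ, ∀ Φ : ℝ → ℝ, LipschitzWith L Φ →
      (∫ x in Icc (0 : ℝ) 1, (Ψ N x - (m x + hatΛ ((N : ℝ) * x))) ^ 2) ≤
        ∫ x in Icc (0 : ℝ) 1, (Φ x - (m x + hatΛ ((N : ℝ) * x))) ^ 2) :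
    Tendsto (fun N : ℕ => ∫ x in Icc (0 : ℝ) 1, (Ψ N x - m x) ^ 2) atTop (𝓝 0) := by
  apply squeeze_zero'
  · exact Eventually.of_forall fun N => integral_nonneg fun x => sq_nonneg _
  · show ∀ᶠ N in atTop,
      (∫ x in Icc (0:ℝ) 1, (Ψ N x - m x) ^ 2) ≤ 4 * (L:ℝ) / N
    filter_upwards [eventually_ge_atTop 1] with N hN
    set f : ℝ → ℝ := fun x => Ψ N x - m x with hf
    have hfc : Continuous f := ((hΨLip N).continuous).sub hm.continuous
    have hg : ∀ x y, |f x - f y| ≤ (2 * (L:ℝ)) * |x - y| := by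
      intro x y
      have h1 := (hΨLip N).dist_le_mul x y
      have h2 := hm.dist_le_mul x y
      simp only [Real.dist_eq] at h1 h2
      have h3 : |f x - f y| ≤ |Ψ N x - Ψ N y| + |m x - m y| := by
        have := abs_add_le (Ψ N x - Ψ N y) (-(m x - m y))
        simp only [abs_neg] at this
        refine le_trans (le_of_eq ?_) this
        congr 1; simp only [hf]; ring
      linarith
    -- integrability
    have hf2 : IntegrableOn (fun x => f x ^ 2) (Icc (0:ℝ) 1) volume :=
      ((hfc.pow 2).integrableOn_Icc)
    have hfh : IntegrableOn (fun x => f x * hatΛ ((N:ℝ) * x)) (Icc (0:ℝ) 1) volume := by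
      rw [integrableOn_Icc_iff_integrableOn_Ioc]
      have := mul_hat_intervalIntegrable f hfc (N:ℝ) 0 1
      rw [intervalIntegrable_iff, uIoc_of_le (zero_le_one)] at this
      exact this
    have hh2 : IntegrableOn (fun x => hatΛ ((N:ℝ) * x) ^ 2) (Icc (0:ℝ) 1) volume := by
      refine Integrable.mono' (g := fun _ => (1:ℝ)) ?_ ?_ ?_
      · exact (integrableOn_const_iff (C := (1:ℝ))).mpr (Or.inr (by simp [Real.volume_Icc]))
      · exact ((hat_measurable.comp (measurable_const_mul _)).pow measurable_const
          ).aestronglyMeasurable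
      · refine Eventually.of_forall fun x => ?_
        rw [Real.norm_eq_abs, abs_pow]
        calc |hatΛ ((N:ℝ) * x)| ^ 2 ≤ 1 ^ 2 := by
              exact pow_le_pow_left₀ (abs_nonneg _) (hat_abs_le _) 2
          _ = 1 := one_pow 2
    -- minimality against Φ = m
    have hmin := hΨmin N m hm
    have eR : (∫ x in Icc (0:ℝ) 1, (m x - (m x + hatΛ ((N:ℝ) * x))) ^ 2)
        = ∫ x in Icc (0:ℝ) 1, hatΛ ((N:ℝ) * x) ^ 2 := by
      simp only [show ∀ x:ℝ, (m x - (m x + hatΛ ((N:ℝ) * x))) ^ 2 = hatΛ ((N:ℝ) * x) ^ 2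
        from fun x => by ring]
    have eL : (∫ x in Icc (0:ℝ) 1, (Ψ N x - (m x + hatΛ ((N:ℝ) * x))) ^ 2)
        = (∫ x in Icc (0:ℝ) 1, f x ^ 2)
          - 2 * (∫ x in Icc (0:ℝ) 1, f x * hatΛ ((N:ℝ) * x))
          + ∫ x in Icc (0:ℝ) 1, hatΛ ((N:ℝ) * x) ^ 2 := by
      have : ∀ x:ℝ, (Ψ N x - (m x + hatΛ ((N:ℝ) * x))) ^ 2
          = (f x ^ 2 - 2 * (f x * hatΛ ((N:ℝ) * x))) + hatΛ ((N:ℝ) * x) ^ 2 := by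
        intro x; simp only [hf]; ring
      simp only [this]
      have h12 : IntegrableOn (fun x => f x ^ 2 - 2 * (f x * hatΛ ((N:ℝ) * x)))
          (Icc (0:ℝ) 1) volume := hf2.sub (hfh.const_mul 2)
      have h2' : IntegrableOn (fun x => 2 * (f x * hatΛ ((N:ℝ) * x)))
          (Icc (0:ℝ) 1) volume := hfh.const_mul 2
      rw [integral_add h12 hh2, integral_sub hf2 h2', MeasureTheory.integral_const_mul]
    rw [eR, eL] at hmin
    have hkey : (∫ x in Icc (0:ℝ) 1, f x * hatΛ ((N:ℝ) * x)) ≤ 2 * (L:ℝ) / N := by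
      have e3 : (∫ x in Icc (0:ℝ) 1, f x * hatΛ ((N:ℝ) * x))
          = ∫ x in (0:ℝ)..1, f x * hatΛ ((N:ℝ) * x) := by
        rw [intervalIntegral.integral_of_le zero_le_one, integral_Icc_eq_integral_Ioc]
      rw [e3]
      have := key_bound (2 * (L:ℝ)) (by positivity) f hfc hg N hN
      exact (le_abs_self _).trans this
    have h4 : (∫ x in Icc (0:ℝ) 1, f x ^ 2)
        ≤ 2 * ∫ x in Icc (0:ℝ) 1, f x * hatΛ ((N:ℝ) * x) := by linarith
    calc (∫ x in Icc (0:ℝ) 1, (Ψ N x - m x) ^ 2)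
        = ∫ x in Icc (0:ℝ) 1, f x ^ 2 := rfl
      _ ≤ 2 * ∫ x in Icc (0:ℝ) 1, f x * hatΛ ((N:ℝ) * x) := h4
      _ ≤ 2 * (2 * (L:ℝ) / N) := by linarith [hkey]
      _ = 4 * (L:ℝ) / N := by ring
  · exact tendsto_const_div_atTop_nhds_zero_nat (4 * (L:ℝ))
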